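/- The number of maximal circular split systems over a set of cardinality n ≥ 4 equals (n-1)!/2, i.e., circular orderings of X up to rotation and reflection are in bijection with maximal circular split systems. -/

import Mathlib

/-!
Two circular orderings `σ` and `σ * d`, with `d` a rotation or reflection of `ZMod n`, have the
same arcs and hence the same split system. Conversely, if `σ` and `τ` induce the same split
system, then every two-element `τ`-arc `{τ i, τ (i + 1)}` is a `σ`-arc as well (for `n ≥ 4`
its complement has at least two elements, so it gives a split), hence `σ⁻¹ * τ` sends
neighbours to neighbours and is a rotation or a reflection. So the split systems correspond to
the left cosets of the dihedral group `D_n` in the symmetric group of `ZMod n`, and there are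
`n! / (2n) = (n-1)!/2` of them.
-/

/-- `A` is an arc of the circular ordering given by `σ`. -/
def IsArc {n : ℕ} (σ : Equiv.Perm (ZMod n)) (A : Finset (ZMod n)) : Prop :=
  ∃ (i : ZMod n) (l : ℕ), A = (Finset.range l).image fun k : ℕ => σ (i + (k : ZMod n))

/-- `P` is a non-trivial split circular with respect to `σ`. -/
def IsCircSplit {n : ℕ} [NeZero n] (σ : Equiv.Perm (ZMod n))
    (P : Finset (Finset (ZMod n))) : Prop :=
  ∃ A : Finset (ZMod n), P = {A, Aᶜ} ∧ 2 ≤ A.card ∧ 2 ≤ Aᶜ.card ∧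
    (IsArc σ A ∨ IsArc σ Aᶜ)

open Finset

theorem Subgroup.ncard_range_eq_index {G α : Type*} [Group G] (H : Subgroup G) {f : G → α}
    (hf : ∀ a b, f a = f b ↔ a⁻¹ * b ∈ H) : (Set.range f).ncard = H.index := by
  have hker : Setoid.ker f = QuotientGroup.leftRel H :=
    Setoid.ext fun a b => Setoid.ker_def.trans <| (hf a b).trans QuotientGroup.leftRel_apply.symm
  rw [← Nat.card_coe_set_eq, ← Nat.card_congr (Setoid.quotientKerEquivRange f), hker]
  rfl

theorem Finset.image_equiv_compl {α β : Type*} [Fintype α] [Fintype β] [DecidableEq α]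
    [DecidableEq β] (σ : α ≃ β) (s : Finset α) : (s.image σ)ᶜ = sᶜ.image σ :=
  Finset.coe_injective (by push_cast; exact (σ.image_compl s).symm)

namespace ZMod

variable {n : ℕ}

theorem two_ne_zero_of_three_le (hn : 3 ≤ n) : (2 : ZMod n) ≠ 0 := by
  intro h
  have := Nat.le_of_dvd two_pos ((ZMod.natCast_eq_zero_iff 2 n).1 (by exact_mod_cast h))
  omega

theorem forall_of_add_one [NeZero n] {p : ZMod n → Prop} (h0 : p 0)
    (h : ∀ i, p i → p (i + 1)) (x : ZMod n) : p x := by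
  rw [← ZMod.natCast_zmod_val x]
  induction x.val with
  | zero => simpa
  | succ k ih => push_cast; exact h _ ih

end ZMod

def dihedralPerm (n : ℕ) : DihedralGroup n →* Equiv.Perm (ZMod n) where
  toFun
    | .r i => Equiv.addRight i
    | .sr i => (Equiv.neg _).trans (Equiv.subRight i)
  map_one' := by ext x; simp [← DihedralGroup.r_zero]
  map_mul' := by
    rintro (a | a) (b | b) <;> ext x <;>
      simp [DihedralGroup.r_mul_r, DihedralGroup.r_mul_sr, DihedralGroup.sr_mul_r,
        DihedralGroup.sr_mul_sr] <;> ring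

section DihedralPerm

variable {n : ℕ}

@[simp] theorem dihedralPerm_r (i x : ZMod n) : dihedralPerm n (.r i) x = x + i := rfl

@[simp] theorem dihedralPerm_sr (i x : ZMod n) : dihedralPerm n (.sr i) x = -x - i := rfl

theorem dihedralPerm_injective (h2 : (2 : ZMod n) ≠ 0) :
    Function.Injective (dihedralPerm n) := by
  rw [injective_iff_map_eq_one]
  rintro (a | a) h
  · obtain rfl : a = 0 := by simpa using DFunLike.congr_fun h 0
    exact DihedralGroup.r_zero
  · have h0 := DFunLike.congr_fun h 0
    have h1 := DFunLike.congr_fun h 1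
    simp only [dihedralPerm_sr, neg_zero, zero_sub, Equiv.Perm.coe_one, id_eq, neg_eq_zero]
      at h0 h1
    exact absurd (by linear_combination -h1 - h0 : (2 : ZMod n) = 0) h2

end DihedralPerm

section Arcs

variable {n : ℕ}

def arc (i : ZMod n) (l : ℕ) : Finset (ZMod n) := (range l).image fun k : ℕ => i + k

theorem isArc_iff_exists_arc {σ : Equiv.Perm (ZMod n)} {A : Finset (ZMod n)} :
    IsArc σ A ↔ ∃ i l, A = (arc i l).image σ := by
  simp only [IsArc, arc, image_image]
  rfl

theorem arc_add (i : ZMod n) (l m : ℕ) :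
    arc i (l + m) = arc i l ∪ arc (i + (l : ZMod n)) m := by
  rw [arc, range_add_eq_union, image_union, map_eq_image, image_image]
  simp [arc, Function.comp_def, add_assoc]

theorem arc_two (i : ZMod n) : arc i 2 = {i, i + 1} := by
  simp [arc, range_add_one, pair_comm]

theorem card_arc (i : ZMod n) {l : ℕ} (hl : l ≤ n) : #(arc i l) = l := by
  rw [arc, card_image_of_injOn, card_range]
  intro a ha b hb hab
  have hab : (a : ZMod n) = b := add_left_cancel hab
  simp only [coe_range, Set.mem_Iio] at ha hb
  rwa [ZMod.natCast_eq_natCast_iff', Nat.mod_eq_of_lt (ha.trans_le hl),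
    Nat.mod_eq_of_lt (hb.trans_le hl)] at hab

theorem image_arc_add_right (c i : ZMod n) (l : ℕ) :
    (arc i l).image (· + c) = arc (i + c) l := by
  simp [arc, image_image, Function.comp_def, add_right_comm]

theorem image_arc_neg_sub (c i : ZMod n) (l : ℕ) :
    (arc i l).image (fun x => -x - c) = arc (-(i + ((l - 1 : ℕ) : ZMod n)) - c) l := by
  rw [arc, arc, image_image]
  conv_rhs => rw [← range_image_pred_top_sub l, image_image]
  refine image_congr fun k hk => ?_
  have hk : k ≤ l - 1 := by simp at hk; omega
  simp only [Function.comp_apply, Nat.cast_sub hk]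
  ring

theorem exists_image_dihedralPerm_arc (a : DihedralGroup n) (i : ZMod n) (l : ℕ) :
    ∃ j, (arc i l).image (dihedralPerm n a) = arc j l := by
  cases a with
  | r c => exact ⟨_, image_arc_add_right c i l⟩
  | sr c => exact ⟨_, image_arc_neg_sub c i l⟩

theorem IsArc.mul_dihedralPerm {σ : Equiv.Perm (ZMod n)} {A : Finset (ZMod n)} (h : IsArc σ A)
    (a : DihedralGroup n) : IsArc (σ * dihedralPerm n a) A := by
  obtain ⟨i, l, rfl⟩ := isArc_iff_exists_arc.1 h
  obtain ⟨j, hj⟩ := exists_image_dihedralPerm_arc a⁻¹ i l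
  refine isArc_iff_exists_arc.2 ⟨j, l, ?_⟩
  rw [← hj, image_image]
  refine image_congr fun x _ => ?_
  simp [map_inv]

theorem isArc_mul_dihedralPerm_iff {σ : Equiv.Perm (ZMod n)} {A : Finset (ZMod n)}
    (a : DihedralGroup n) : IsArc (σ * dihedralPerm n a) A ↔ IsArc σ A :=
  ⟨fun h => by simpa [mul_assoc, ← map_mul] using h.mul_dihedralPerm a⁻¹,
    fun h => h.mul_dihedralPerm a⟩

variable [NeZero n]

theorem arc_eq_univ (i : ZMod n) {l : ℕ} (hl : n ≤ l) : arc i l = univ :=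
  eq_univ_of_forall fun x =>
    mem_image.2 ⟨(x - i).val, mem_range.2 ((ZMod.val_lt _).trans_le hl), by simp⟩

theorem compl_arc (i : ZMod n) (l : ℕ) : (arc i l)ᶜ = arc (i + (l : ZMod n)) (n - l) := by
  rcases le_total l n with hl | hl
  · have hunion : arc i l ∪ arc (i + (l : ZMod n)) (n - l) = univ := by
      rw [← arc_add, Nat.add_sub_cancel' hl, arc_eq_univ i le_rfl]
    have hdisj : Disjoint (arc i l) (arc (i + (l : ZMod n)) (n - l)) := by
      rw [← card_union_eq_card_add_card, hunion, card_univ, ZMod.card, card_arc _ hl,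
        card_arc _ (n.sub_le l)]
      omega
    exact IsCompl.compl_eq ⟨hdisj, codisjoint_iff.2 hunion⟩
  · rw [arc_eq_univ i hl, Nat.sub_eq_zero_of_le hl, compl_univ]
    rfl

theorem arc_eq_pair_of_card_eq_two {i : ZMod n} {l : ℕ} (h : #(arc i l) = 2) :
    arc i l = {i, i + 1} := by
  rw [← arc_two]
  rcases le_total l n with hl | hl
  · rw [card_arc i hl] at h
    rw [h]
  · rw [arc_eq_univ i hl, card_univ, ZMod.card] at h
    subst h
    rw [arc_eq_univ i hl, arc_eq_univ i le_rfl]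

theorem IsArc.compl {σ : Equiv.Perm (ZMod n)} {A : Finset (ZMod n)} (h : IsArc σ A) :
    IsArc σ Aᶜ := by
  obtain ⟨i, l, rfl⟩ := isArc_iff_exists_arc.1 h
  exact isArc_iff_exists_arc.2 ⟨_, _, by rw [Finset.image_equiv_compl, compl_arc]⟩

theorem isArc_compl_iff {σ : Equiv.Perm (ZMod n)} {A : Finset (ZMod n)} :
    IsArc σ Aᶜ ↔ IsArc σ A :=
  ⟨fun h => compl_compl A ▸ h.compl, IsArc.compl⟩

end Arcs

section Splits

variable {n : ℕ} [NeZero n]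

theorem isCircSplit_iff {σ : Equiv.Perm (ZMod n)} {P : Finset (Finset (ZMod n))} :
    IsCircSplit σ P ↔ ∃ A, P = {A, Aᶜ} ∧ 2 ≤ #A ∧ 2 ≤ #Aᶜ ∧ IsArc σ A := by
  simp only [IsCircSplit, isArc_compl_iff, or_self]

theorem IsCircSplit.isArc {σ : Equiv.Perm (ZMod n)} {A : Finset (ZMod n)}
    (h : IsCircSplit σ {A, Aᶜ}) : IsArc σ A := by
  obtain ⟨B, hB, -, -, hBσ⟩ := isCircSplit_iff.1 h
  have hA : A ∈ ({B, Bᶜ} : Finset (Finset (ZMod n))) := hB ▸ mem_insert_self _ _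
  rcases mem_insert.1 hA with rfl | hA
  · exact hBσ
  · rw [mem_singleton.1 hA]
    exact hBσ.compl

def circSplitSystem (σ : Equiv.Perm (ZMod n)) : Set (Finset (Finset (ZMod n))) :=
  {P | IsCircSplit σ P}

theorem circSplitSystem_mul_dihedralPerm (σ : Equiv.Perm (ZMod n)) (a : DihedralGroup n) :
    circSplitSystem (σ * dihedralPerm n a) = circSplitSystem σ := by
  ext P
  simp only [circSplitSystem, Set.mem_ofPred_eq, isCircSplit_iff, isArc_mul_dihedralPerm_iff]

theorem exists_pair_eq_of_circSplitSystem_eq (hn : 4 ≤ n) {σ τ : Equiv.Perm (ZMod n)}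
    (h : circSplitSystem τ = circSplitSystem σ) (i : ZMod n) :
    ∃ j, ({τ i, τ (i + 1)} : Finset (ZMod n)) = {σ j, σ (j + 1)} := by
  have : Fact (1 < n) := ⟨by omega⟩
  set A : Finset (ZMod n) := {τ i, τ (i + 1)}
  have hA : #A = 2 := card_pair (τ.injective.ne (by simp))
  have hτ : IsCircSplit τ {A, Aᶜ} := isCircSplit_iff.2 ⟨A, rfl, hA.ge,
    by rw [card_compl, hA, ZMod.card]; omega, ⟨i, 2, by simp [A, range_add_one, pair_comm]⟩⟩
  have hσ : IsCircSplit σ {A, Aᶜ} := by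
    change _ ∈ circSplitSystem σ
    rwa [← h]
  obtain ⟨j, l, hjl⟩ := isArc_iff_exists_arc.1 hσ.isArc
  rw [hjl, card_image_of_injective _ σ.injective] at hA
  refine ⟨j, ?_⟩
  rw [hjl, arc_eq_pair_of_card_eq_two hA]
  simp [image_insert]

theorem mem_range_dihedralPerm_of_adjacent (h2 : (2 : ZMod n) ≠ 0) {g : Equiv.Perm (ZMod n)}
    (hg : ∀ i, g (i + 1) = g i + 1 ∨ g (i + 1) = g i - 1) : g ∈ (dihedralPerm n).range := by
  set e := g 1 - g 0
  have he : e = 1 ∨ e = -1 := by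
    rcases hg 0 with h | h <;> rw [zero_add] at h <;> simp [e, h]
  have hback (i : ZMod n) : g (i + 1 + 1) ≠ g i := fun h =>
    h2 (by simpa [add_assoc, one_add_one_eq_two] using g.injective h)
  have hstep : ∀ i, g (i + 1) = g i + e := by
    refine ZMod.forall_of_add_one (by simp [e]) fun i hi => ?_
    rcases he with he | he <;> rcases hg (i + 1) with h | h
    · rw [h, he]
    · exact absurd (by rw [h, hi, he]; ring) (hback i)
    · exact absurd (by rw [h, hi, he]; ring) (hback i)
    · rw [h, he, sub_eq_add_neg]
  have hlin : ∀ x, g x = e * x + g 0 :=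
    ZMod.forall_of_add_one (by simp) fun i hi => by rw [hstep, hi]; ring
  rcases he with he | he
  · exact ⟨.r (g 0), Equiv.ext fun x => by simp [hlin x, he]⟩
  · exact ⟨.sr (-g 0), Equiv.ext fun x => by simp [hlin x, he]⟩

theorem mem_range_dihedralPerm_of_circSplitSystem_eq (hn : 4 ≤ n) {σ g : Equiv.Perm (ZMod n)}
    (h : circSplitSystem (σ * g) = circSplitSystem σ) : g ∈ (dihedralPerm n).range := by
  refine mem_range_dihedralPerm_of_adjacent (ZMod.two_ne_zero_of_three_le (by omega)) fun i => ?_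
  obtain ⟨j, hj⟩ := exists_pair_eq_of_circSplitSystem_eq hn h i
  have hj' : ({g i, g (i + 1)} : Set (ZMod n)) = {j, j + 1} := by
    simpa using congrArg (fun s : Finset (ZMod n) => (↑(s.image σ.symm) : Set (ZMod n))) hj
  rcases Set.pair_eq_pair_iff.1 hj' with ⟨h1, h2⟩ | ⟨h1, h2⟩
  · left
    rw [h1, h2]
  · right
    rw [h1, h2]
    ring

theorem circSplitSystem_eq_iff (hn : 4 ≤ n) (σ τ : Equiv.Perm (ZMod n)) :
    circSplitSystem σ = circSplitSystem τ ↔ σ⁻¹ * τ ∈ (dihedralPerm n).range := by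
  constructor
  · intro h
    apply mem_range_dihedralPerm_of_circSplitSystem_eq hn (σ := σ)
    rw [mul_inv_cancel_left, h]
  · rintro ⟨a, ha⟩
    rw [← mul_inv_cancel_left σ τ, ← ha, circSplitSystem_mul_dihedralPerm]

end Splits

/-- The number of maximal circular split systems over a set of cardinality `n ≥ 4`
equals `(n-1)!/2`. -/
theorem stmt6 (n : ℕ) [NeZero n] (hn : 4 ≤ n) :
    {𝒮 : Set (Finset (Finset (ZMod n))) |
      ∃ σ : Equiv.Perm (ZMod n), 𝒮 = {P | IsCircSplit σ P}}.ncard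
      = (n - 1).factorial / 2 := by
  have hrange : {𝒮 : Set (Finset (Finset (ZMod n))) |
      ∃ σ : Equiv.Perm (ZMod n), 𝒮 = {P | IsCircSplit σ P}} = Set.range circSplitSystem := by
    ext 𝒮
    simp [circSplitSystem, eq_comm]
  have hcard := (dihedralPerm n).range.card_mul_index
  rw [Nat.card_congr (MonoidHom.ofInjective (dihedralPerm_injective
      (ZMod.two_ne_zero_of_three_le (by omega)))).toEquiv.symm, DihedralGroup.nat_card,
    Nat.card_perm, Nat.card_zmod, ← Nat.mul_factorial_pred (NeZero.ne n)] at hcard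
  rw [hrange, Subgroup.ncard_range_eq_index _ (circSplitSystem_eq_iff hn)]
  have : 2 * (dihedralPerm n).range.index = (n - 1).factorial :=
    Nat.eq_of_mul_eq_mul_left (NeZero.pos n) (by rw [← hcard]; ring)
  omega
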